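/- Let Ω ⊂ ℝ³ be a bounded open set, and let ℂ, ℍ be linear maps from ℝ^{3×3} to ℝ^{3×3} mapping symmetric matrices to symmetric matrices, self-adjoint with respect to the Frobenius inner product, and satisfying c_m‖X‖² ≤ ⟨ℂ.X, X⟩ ≤ c_M‖X‖² and h_m‖X‖² ≤ ⟨ℍ.X, X⟩ ≤ h_M‖X‖² for all symmetric X with constants c_m, c_M, h_m, h_M > 0. Then there exists a constant a₂ > 0 such that for every continuously differentiable vector field u : ℝ³ → ℝ³ with compact support contained in Ω and every continuous matrix field P : Ω → ℝ^{3×3} with ∫_Ω ‖P‖² dx < ∞: a₂ · ( ∫_Ω ‖∇u‖² dx + ∫_Ω ‖dev sym P‖² dx ) ≤ ∫_Ω ( ⟨ℂ.sym(∇u − P), sym(∇u − P)⟩ + ⟨ℍ.dev sym P, dev sym P⟩ ) dx. -/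

import Mathlib

open MeasureTheory

noncomputable section

/-- Points of ℝ³. -/
abbrev R3 : Type := Fin 3 → ℝ
/-- 3×3 real matrices (as functions). -/
abbrev M3 : Type := Fin 3 → Fin 3 → ℝ

/-- Frobenius inner product ⟨X,Y⟩ = tr(X Yᵀ) = ∑ᵢⱼ Xᵢⱼ Yᵢⱼ. -/
def finner (X Y : M3) : ℝ := ∑ i, ∑ j, X i j * Y i j

/-- Squared Frobenius norm ‖X‖². -/
def fnormSq (X : M3) : ℝ := finner X X

/-- Matrix trace. -/
def trM (X : M3) : ℝ := ∑ i, X i i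

/-- Matrix transpose. -/
def transp (X : M3) : M3 := fun i j => X j i

/-- Symmetric part sym X = (X + Xᵀ)/2. -/
def symMat (X : M3) : M3 := fun i j => (X i j + X j i) / 2

/-- Skew-symmetric part skew X = (X − Xᵀ)/2. -/
def skeww (X : M3) : M3 := fun i j => (X i j - X j i) / 2

/-- 3×3 identity matrix. -/
def idM : M3 := fun i j => if i = j then 1 else 0

/-- Deviatoric (trace-free) part dev X = X − (tr X / 3)·𝟙. -/
def devv (X : M3) : M3 := fun i j => X i j - (trM X / 3) * idM i j

/-- X is a symmetric matrix. -/
def isSymmM (X : M3) : Prop := ∀ i j, X i j = X j i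

/-- Partial derivative ∂ⱼ f (x). -/
def pd (j : Fin 3) (f : R3 → ℝ) (x : R3) : ℝ := fderiv ℝ f x (Pi.single j 1)

/-- curl v = (∂₂v₃ − ∂₃v₂, ∂₃v₁ − ∂₁v₃, ∂₁v₂ − ∂₂v₁) (0-based indices). -/
def curlV (v : R3 → R3) (x : R3) : R3 :=
  ![pd 1 (fun y => v y 2) x - pd 2 (fun y => v y 1) x,
    pd 2 (fun y => v y 0) x - pd 0 (fun y => v y 2) x,
    pd 0 (fun y => v y 1) x - pd 1 (fun y => v y 0) x]

/-- Row-wise Curl of a matrix field: the i-th row of Curl P is curl of the i-th row of P. -/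
def CurlM (P : R3 → M3) (x : R3) : M3 := fun i => curlV (fun y => P y i) x

/-- Jacobian matrix (∇u)ᵢⱼ = ∂ⱼ uᵢ. -/
def jac (u : R3 → R3) (x : R3) : M3 := fun i j => pd j (fun y => u y i) x

open Filter Topology
open scoped Convolution

/-!
For a compactly supported `C¹` field `u`, the pointwise identity
`‖dev sym A‖² = ‖A‖²/2 + ⟨A, Aᵀ⟩/2 - (tr A)²/3` and the integrated identity
`∫ ⟨∇u, ∇uᵀ⟩ = ∫ (div u)²` give the Korn-type inequality `∫ ‖∇u‖² ≤ 2 ∫ ‖dev sym ∇u‖²`.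
The integrated identity is integration by parts twice, `∫ ∂ⱼuᵢ ∂ᵢuⱼ = -∫ uᵢ ∂ᵢ∂ⱼuⱼ = ∫ ∂ᵢuᵢ ∂ⱼuⱼ`,
which needs a second derivative of `uⱼ`: it is proved for a mollification of `uⱼ` and passes
to the limit by dominated convergence.
Splitting `dev sym ∇u = dev sym (∇u - P) + dev sym P` and using the lower bounds of `ℂ` and `ℍ`
then gives the estimate with `a₂ = min (c_m / 4) (h_m / 5)`.
-/

section Mollification

variable {E : Type*} [NormedAddCommGroup E]

def bumpSeq (n : ℕ) : ContDiffBump (0 : E) where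
  rIn := ((n : ℝ) + 1)⁻¹ / 2
  rOut := ((n : ℝ) + 1)⁻¹
  rIn_pos := by positivity
  rIn_lt_rOut := half_lt_self (by positivity)

lemma tendsto_rOut_bumpSeq :
    Tendsto (fun n => (bumpSeq n : ContDiffBump (0 : E)).rOut) atTop (𝓝 0) :=
  tendsto_inv_atTop_zero.comp (tendsto_natCast_atTop_atTop.atTop_add tendsto_const_nhds)

variable [NormedSpace ℝ E] [FiniteDimensional ℝ E] [MeasurableSpace E] [BorelSpace E]
  (μ : Measure E) [μ.IsAddHaarMeasure]

def mollify (n : ℕ) (g : E → ℝ) : E → ℝ :=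
  (bumpSeq n).normed μ ⋆[ContinuousLinearMap.lsmul ℝ ℝ, μ] g

variable {μ} {g : E → ℝ}

lemma contDiff_mollify {k : ℕ∞} (hg : LocallyIntegrable g μ) (n : ℕ) :
    ContDiff ℝ k (mollify μ n g) := by
  unfold mollify
  exact (bumpSeq n).hasCompactSupport_normed.contDiff_convolution_left _
    (bumpSeq n).contDiff_normed hg

lemma fderiv_mollify_apply (hg : ContDiff ℝ 1 g) (hcg : HasCompactSupport g) (n : ℕ)
    (x w : E) :
    fderiv ℝ (mollify μ n g) x w = mollify μ n (fun y => fderiv ℝ g y w) x := by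
  have hφ := (bumpSeq n).integrable_normed (μ := μ) |>.locallyIntegrable
  rw [mollify, (hcg.hasFDerivAt_convolution_right _ hφ hg x).fderiv,
    convolution_precompR_apply _ hφ (hcg.fderiv ℝ) (hg.continuous_fderiv one_ne_zero)]
  rfl

lemma tendsto_mollify (hg : Continuous g) (x : E) :
    Tendsto (fun n => mollify μ n g x) atTop (𝓝 (g x)) := by
  unfold mollify
  exact ContDiffBump.convolution_tendsto_right_of_continuous tendsto_rOut_bumpSeq hg x

lemma norm_mollify_le {M : ℝ} (hg : AEStronglyMeasurable g μ) (hM : ∀ y, ‖g y‖ ≤ M) (n : ℕ)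
    (x : E) : ‖mollify μ n g x‖ ≤ M := by
  unfold mollify
  simpa using dist_convolution_le (z₀ := 0) ((norm_nonneg _).trans (hM 0))
    (bumpSeq n).support_normed_eq.subset (bumpSeq n).nonneg_normed (bumpSeq n).integral_normed
    hg (fun y _ => by simpa using hM y)

end Mollification

section IntegrationByParts

variable {E : Type*} [NormedAddCommGroup E] [NormedSpace ℝ E] [FiniteDimensional ℝ E]
  [MeasurableSpace E] [BorelSpace E] {μ : Measure E} [μ.IsAddHaarMeasure] {f g : E → ℝ}

lemma integral_fderiv_mul_fderiv_comm_of_contDiff_two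
    (hf : ContDiff ℝ 1 f) (hcf : HasCompactSupport f) (hg : ContDiff ℝ 2 g) (v w : E) :
    ∫ x, fderiv ℝ f x v * fderiv ℝ g x w ∂μ = ∫ x, fderiv ℝ f x w * fderiv ℝ g x v ∂μ := by
  have hg' : ContDiff ℝ 1 (fderiv ℝ g) := hg.fderiv_right (by norm_num)
  have hdg : ∀ u, ContDiff ℝ 1 (fun x => fderiv ℝ g x u) := fun u => hg'.clm_apply contDiff_const
  have hdf : ∀ u, Continuous (fun x => fderiv ℝ f x u) := fun u =>
    (hf.continuous_fderiv one_ne_zero).clm_apply continuous_const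
  have fderiv_fderiv_apply : ∀ u u' x, fderiv ℝ (fun y => fderiv ℝ g y u') x u =
      fderiv ℝ (fderiv ℝ g) x u u' := fun u u' x => by
    rw [fderiv_clm_apply (hg'.differentiable one_ne_zero x) (differentiableAt_const _)]
    simp
  have ibp : ∀ u u', ∫ x, fderiv ℝ f x u * fderiv ℝ g x u' ∂μ =
      -∫ x, f x * fderiv ℝ (fderiv ℝ g) x u u' ∂μ := fun u u' => by
    simp_rw [← fderiv_fderiv_apply]
    rw [integral_mul_fderiv_eq_neg_fderiv_mul_of_integrable (μ := μ) ?_ ?_ ?_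
      (fun x _ => hf.differentiable one_ne_zero x)
      (fun x _ => (hdg u').differentiable one_ne_zero x), neg_neg]
    · exact ((hdf u).mul (hdg u').continuous).integrable_of_hasCompactSupport
        (hcf.fderiv_apply ℝ u).mul_right
    · exact (hf.continuous.mul ((hdg u').continuous_fderiv one_ne_zero |>.clm_apply
        continuous_const)).integrable_of_hasCompactSupport hcf.mul_right
    · exact (hf.continuous.mul (hdg u').continuous).integrable_of_hasCompactSupport hcf.mul_right
  rw [ibp, ibp]
  congr 2 with x
  rw [(hg.contDiffAt (x := x)).isSymmSndFDerivAt (by simp) v w]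

lemma tendsto_integral_fderiv_mul_fderiv_mollify (hf : ContDiff ℝ 1 f)
    (hcf : HasCompactSupport f) (hg : ContDiff ℝ 1 g) (hcg : HasCompactSupport g) (v w : E) :
    Tendsto (fun n => ∫ x, fderiv ℝ f x v * fderiv ℝ (mollify μ n g) x w ∂μ) atTop
      (𝓝 (∫ x, fderiv ℝ f x v * fderiv ℝ g x w ∂μ)) := by
  have hdf : Continuous (fun x => fderiv ℝ f x v) :=
    (hf.continuous_fderiv one_ne_zero).clm_apply continuous_const
  have hdg : Continuous (fun x => fderiv ℝ g x w) :=
    (hg.continuous_fderiv one_ne_zero).clm_apply continuous_const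
  obtain ⟨M, hM⟩ := (hcg.fderiv_apply ℝ w).exists_bound_of_continuous hdg
  simp_rw [fderiv_mollify_apply hg hcg]
  refine tendsto_integral_of_dominated_convergence (fun x => ‖fderiv ℝ f x v‖ * M)
    (fun n => (hdf.mul (contDiff_mollify (k := 0) hdg.locallyIntegrable n).continuous)
      |>.aestronglyMeasurable)
    ((hdf.norm.mul continuous_const).integrable_of_hasCompactSupport
      (hcf.fderiv_apply ℝ v).norm.mul_right)
    (fun n => Eventually.of_forall fun x => ?_)
    (Eventually.of_forall fun x => tendsto_const_nhds.mul (tendsto_mollify hdg x))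
  rw [norm_mul]
  gcongr
  exact norm_mollify_le hdg.aestronglyMeasurable hM n x

theorem integral_fderiv_mul_fderiv_comm (hf : ContDiff ℝ 1 f) (hcf : HasCompactSupport f)
    (hg : ContDiff ℝ 1 g) (hcg : HasCompactSupport g) (v w : E) :
    ∫ x, fderiv ℝ f x v * fderiv ℝ g x w ∂μ = ∫ x, fderiv ℝ f x w * fderiv ℝ g x v ∂μ := by
  refine tendsto_nhds_unique (tendsto_integral_fderiv_mul_fderiv_mollify hf hcf hg hcg v w) ?_
  simp_rw [integral_fderiv_mul_fderiv_comm_of_contDiff_two hf hcf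
    (contDiff_mollify hg.continuous.locallyIntegrable _) v w]
  exact tendsto_integral_fderiv_mul_fderiv_mollify hf hcf hg hcg w v

end IntegrationByParts

section MatrixAlgebra

lemma fnormSq_nonneg (X : M3) : 0 ≤ fnormSq X :=
  show 0 ≤ ∑ i, ∑ j, X i j * X i j from
    Finset.sum_nonneg fun i _ => Finset.sum_nonneg fun j _ => mul_self_nonneg (X i j)

@[simp]
lemma fnormSq_zero : fnormSq 0 = 0 := by
  simp [fnormSq, finner]

@[simp]
lemma devv_symMat_zero : devv (symMat 0) = 0 := by
  ext i j
  simp [devv, symMat, trM]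

lemma fnormSq_add_add_fnormSq_sub (X Y : M3) :
    fnormSq (X + Y) + fnormSq (X - Y) = 2 * fnormSq X + 2 * fnormSq Y := by
  simp only [fnormSq, finner, Pi.add_apply, Pi.sub_apply, Fin.sum_univ_three]
  ring

lemma fnormSq_add_le (X Y : M3) : fnormSq (X + Y) ≤ 2 * fnormSq X + 2 * fnormSq Y := by
  linarith [fnormSq_add_add_fnormSq_sub X Y, fnormSq_nonneg (X - Y)]

lemma fnormSq_sub_le (X Y : M3) : fnormSq (X - Y) ≤ 2 * fnormSq X + 2 * fnormSq Y := by
  linarith [fnormSq_add_add_fnormSq_sub X Y, fnormSq_nonneg (X + Y)]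

lemma fnormSq_symMat_le (X : M3) : fnormSq (symMat X) ≤ fnormSq X := by
  simp only [fnormSq, finner, symMat, Fin.sum_univ_three]
  nlinarith [sq_nonneg (X 0 1 - X 1 0), sq_nonneg (X 0 2 - X 2 0), sq_nonneg (X 1 2 - X 2 1)]

lemma fnormSq_devv (X : M3) : fnormSq (devv X) = fnormSq X - trM X ^ 2 / 3 := by
  simp only [fnormSq, finner, devv, trM, idM, Fin.sum_univ_three, Fin.reduceEq, ↓reduceIte]
  ring

lemma fnormSq_devv_le (X : M3) : fnormSq (devv X) ≤ fnormSq X := by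
  rw [fnormSq_devv]
  linarith [sq_nonneg (trM X)]

lemma fnormSq_symMat (X : M3) :
    fnormSq (symMat X) = fnormSq X / 2 + finner X (transp X) / 2 := by
  simp only [fnormSq, finner, symMat, transp, Fin.sum_univ_three]
  ring

lemma trM_symMat (X : M3) : trM (symMat X) = trM X := by
  simp only [trM, symMat, Fin.sum_univ_three]
  ring

lemma fnormSq_devv_symMat (X : M3) :
    fnormSq (devv (symMat X)) = fnormSq X / 2 + finner X (transp X) / 2 - trM X ^ 2 / 3 := by
  rw [fnormSq_devv, fnormSq_symMat, trM_symMat]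

lemma devv_symMat_add (X Y : M3) :
    devv (symMat (X + Y)) = devv (symMat X) + devv (symMat Y) := by
  ext i j
  simp only [devv, symMat, trM, Pi.add_apply, Fin.sum_univ_three]
  ring

lemma fnormSq_devv_symMat_le (G P : M3) :
    fnormSq (devv (symMat G)) ≤ 2 * fnormSq (symMat (G - P)) + 2 * fnormSq (devv (symMat P)) := by
  have hG : devv (symMat G) = devv (symMat (G - P)) + devv (symMat P) := by
    rw [← devv_symMat_add, sub_add_cancel]
  rw [hG]
  linarith [fnormSq_add_le (devv (symMat (G - P))) (devv (symMat P)),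
    fnormSq_devv_le (symMat (G - P))]

lemma isSymmM_symMat (X : M3) : isSymmM (symMat X) := fun i j => by
  simp only [symMat]
  ring

lemma isSymmM_devv {X : M3} (hX : isSymmM X) : isSymmM (devv X) := fun i j => by
  simp only [devv, idM, hX i j, eq_comm]

@[fun_prop]
lemma continuous_fnormSq : Continuous fnormSq := by
  unfold fnormSq finner
  fun_prop

@[fun_prop]
lemma continuous_symMat : Continuous symMat := by
  unfold symMat
  fun_prop

@[fun_prop]
lemma continuous_devv : Continuous devv := by
  unfold devv trM
  fun_prop

@[fun_prop]
lemma continuous_finner_apply (L : M3 →ₗ[ℝ] M3) : Continuous fun X => finner (L X) X := by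
  have := L.continuous_of_finiteDimensional
  unfold finner
  fun_prop

end MatrixAlgebra

section Jacobian

variable {u : R3 → R3}

lemma jac_eq_fderiv (hu : Differentiable ℝ u) :
    jac u = fun x i j => fderiv ℝ u x (Pi.single j 1) i := by
  ext x i j
  simp only [jac, pd, fderiv_apply (hu x) i, ContinuousLinearMap.comp_apply,
    ContinuousLinearMap.proj_apply]

@[fun_prop]
lemma continuous_jac (hu : ContDiff ℝ 1 u) : Continuous (jac u) := by
  rw [jac_eq_fderiv (hu.differentiable one_ne_zero)]
  have := hu.continuous_fderiv one_ne_zero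
  fun_prop

lemma support_jac_subset (hu : Differentiable ℝ u) :
    Function.support (jac u) ⊆ tsupport u := by
  refine subset_trans (fun x hx => ?_) (support_fderiv_subset ℝ)
  rw [Function.mem_support] at hx ⊢
  contrapose! hx
  simp only [jac_eq_fderiv hu, hx, zero_apply, Pi.zero_apply]
  rfl

variable {Φ : M3 → ℝ}

lemma integrable_comp_jac (hΦ : Continuous Φ) (hΦ0 : Φ 0 = 0) (hu : ContDiff ℝ 1 u)
    (hcu : HasCompactSupport u) : Integrable fun x => Φ (jac u x) :=
  (hΦ.comp (continuous_jac hu)).integrable_of_hasCompactSupport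
    ((hcu.mono' (support_jac_subset (hu.differentiable one_ne_zero))).comp_left hΦ0)

lemma setIntegral_comp_jac_eq_integral (hΦ0 : Φ 0 = 0) (hu : Differentiable ℝ u) {Ω : Set R3}
    (hΩ : tsupport u ⊆ Ω) : ∫ x in Ω, Φ (jac u x) = ∫ x, Φ (jac u x) :=
  setIntegral_eq_integral_of_forall_compl_eq_zero fun x hx => by
    rw [Function.notMem_support.mp fun h => hx (hΩ (support_jac_subset hu h)), hΦ0]

end Jacobian

section Korn

variable {u : R3 → R3}

lemma integral_finner_jac_transp (hu : ContDiff ℝ 1 u) (hcu : HasCompactSupport u) :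
    ∫ x, finner (jac u x) (transp (jac u x)) = ∫ x, trM (jac u x) ^ 2 := by
  have hint : ∀ a b c d : Fin 3, Integrable fun x => jac u x a b * jac u x c d := fun a b c d =>
    integrable_comp_jac (Φ := fun X => X a b * X c d) (by fun_prop) (by simp) hu hcu
  have hcomp : ∀ i, ContDiff ℝ 1 fun y => u y i := contDiff_pi.mp hu
  have hccomp : ∀ i, HasCompactSupport fun y => u y i := fun i =>
    (hcu.comp_left (g := fun v : R3 => v i) rfl :)
  have hswap : ∀ i j, ∫ x, jac u x i j * jac u x j i = ∫ x, jac u x i i * jac u x j j :=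
    fun i j => integral_fderiv_mul_fderiv_comm (hcomp i) (hccomp i) (hcomp j) (hccomp j) _ _
  simp only [finner, transp, sq, trM, Finset.sum_mul_sum]
  rw [integral_finsetSum _ fun i _ => integrable_finsetSum _ fun j _ => hint i j j i,
    integral_finsetSum _ fun i _ => integrable_finsetSum _ fun j _ => hint i i j j]
  refine Finset.sum_congr rfl fun i _ => ?_
  rw [integral_finsetSum _ fun j _ => hint i j j i, integral_finsetSum _ fun j _ => hint i i j j]
  exact Finset.sum_congr rfl fun j _ => hswap i j

lemma integral_fnormSq_jac_le (hu : ContDiff ℝ 1 u) (hcu : HasCompactSupport u) :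
    ∫ x, fnormSq (jac u x) ≤ 2 * ∫ x, fnormSq (devv (symMat (jac u x))) := by
  have hint : ∀ {Φ : M3 → ℝ}, Continuous Φ → Φ 0 = 0 → Integrable fun x => Φ (jac u x) :=
    fun hΦ hΦ0 => integrable_comp_jac hΦ hΦ0 hu hcu
  have h1 := hint continuous_fnormSq fnormSq_zero
  have h2 := hint (Φ := fun X => finner X (transp X)) (by unfold finner transp; fun_prop)
    (by simp [finner])
  have h3 := hint (Φ := fun X => trM X ^ 2) (by unfold trM; fun_prop) (by simp [trM])
  have hdev : ∫ x, fnormSq (devv (symMat (jac u x))) = (∫ x, fnormSq (jac u x)) / 2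
      + (∫ x, trM (jac u x) ^ 2) / 2 - (∫ x, trM (jac u x) ^ 2) / 3 := by
    simp_rw [fnormSq_devv_symMat]
    rw [integral_sub ((h1.div_const 2).fun_add (h2.div_const 2)) (h3.div_const 3),
      integral_add (h1.div_const 2) (h2.div_const 2), integral_div, integral_div, integral_div,
      integral_finner_jac_transp hu hcu]
  have htr : 0 ≤ ∫ x, trM (jac u x) ^ 2 := integral_nonneg fun x => sq_nonneg _
  linarith

lemma setIntegral_fnormSq_jac_le (hu : ContDiff ℝ 1 u) (hcu : HasCompactSupport u)
    {Ω : Set R3} (hΩ : tsupport u ⊆ Ω) :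
    ∫ x in Ω, fnormSq (jac u x) ≤ 2 * ∫ x in Ω, fnormSq (devv (symMat (jac u x))) := by
  have hdu := hu.differentiable one_ne_zero
  rw [setIntegral_comp_jac_eq_integral fnormSq_zero hdu hΩ,
    setIntegral_comp_jac_eq_integral (Φ := fun X => fnormSq (devv (symMat X))) (by simp) hdu hΩ]
  exact integral_fnormSq_jac_le hu hcu

end Korn

section Coercivity

variable {X : Type*} [TopologicalSpace X] [MeasurableSpace X] [OpensMeasurableSpace X]
  {μ : Measure X} {s : Set X}

lemma integrableOn_of_continuousOn_of_le {f g : X → ℝ} (hs : MeasurableSet s)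
    (hf : ContinuousOn f s) (hg : IntegrableOn g s μ) (hf0 : ∀ x, 0 ≤ f x)
    (hfg : ∀ x, f x ≤ g x) : IntegrableOn f s μ :=
  hg.mono' (hf.aestronglyMeasurable hs) <| Eventually.of_forall fun x => by
    rw [Real.norm_of_nonneg (hf0 x)]
    exact hfg x

lemma integrableOn_finner_apply {L : M3 →ₗ[ℝ] M3} {F : X → M3} {c₁ c₂ : ℝ}
    (hs : MeasurableSet s) (hF : ContinuousOn F s)
    (hFs : IntegrableOn (fun x => fnormSq (F x)) s μ)
    (hL : ∀ x, c₁ * fnormSq (F x) ≤ finner (L (F x)) (F x) ∧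
      finner (L (F x)) (F x) ≤ c₂ * fnormSq (F x)) :
    IntegrableOn (fun x => finner (L (F x)) (F x)) s μ :=
  integrable_of_le_of_le
    (((continuous_finner_apply L).comp_continuousOn hF).aestronglyMeasurable hs)
    (ae_of_all _ fun x => (hL x).1) (ae_of_all _ fun x => (hL x).2) (hFs.const_mul c₁)
    (hFs.const_mul c₂)

lemma integrableOn_fnormSq_devv_symMat {P : X → M3} (hs : MeasurableSet s)
    (hPc : ContinuousOn P s) (hP : IntegrableOn (fun x => fnormSq (P x)) s μ) :
    IntegrableOn (fun x => fnormSq (devv (symMat (P x)))) s μ :=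
  integrableOn_of_continuousOn_of_le hs (by fun_prop) hP (fun x => fnormSq_nonneg _)
    fun x => (fnormSq_devv_le _).trans (fnormSq_symMat_le _)

lemma integrableOn_fnormSq_symMat_jac_sub {u : R3 → R3} {P : R3 → M3} {Ω : Set R3}
    (hu : ContDiff ℝ 1 u) (hcu : HasCompactSupport u) (hΩ : MeasurableSet Ω)
    (hPc : ContinuousOn P Ω) (hP : IntegrableOn (fun x => fnormSq (P x)) Ω) :
    IntegrableOn (fun x => fnormSq (symMat (jac u x - P x))) Ω :=
  integrableOn_of_continuousOn_of_le hΩ (by fun_prop)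
    (((integrable_comp_jac continuous_fnormSq fnormSq_zero hu hcu).integrableOn.const_mul 2).add
      (hP.const_mul 2))
    (fun x => fnormSq_nonneg _) fun x => (fnormSq_symMat_le _).trans (fnormSq_sub_le _ _)

lemma mul_fnormSq_devv_symMat_add_le {cm hm a : ℝ} (ha : 0 ≤ a) (hac : a ≤ cm / 4)
    (hah : a ≤ hm / 5) (G P : M3) :
    a * (2 * fnormSq (devv (symMat G)) + fnormSq (devv (symMat P))) ≤
      cm * fnormSq (symMat (G - P)) + hm * fnormSq (devv (symMat P)) := by
  have hS := fnormSq_nonneg (symMat (G - P))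
  have hD := fnormSq_nonneg (devv (symMat P))
  have hG := mul_le_mul_of_nonneg_left (fnormSq_devv_symMat_le G P) ha
  nlinarith [mul_le_mul_of_nonneg_right hac hS, mul_le_mul_of_nonneg_right hah hD]

end Coercivity

theorem stmt_13_general (Ω : Set R3) (hΩo : IsOpen Ω)
    (CC HH : M3 →ₗ[ℝ] M3)
    (cm cM hm hM : ℝ) (hcm : 0 < cm) (hhm : 0 < hm)
    (hC : ∀ X : M3, isSymmM X →
      cm * fnormSq X ≤ finner (CC X) X ∧ finner (CC X) X ≤ cM * fnormSq X)
    (hH : ∀ X : M3, isSymmM X →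
      hm * fnormSq X ≤ finner (HH X) X ∧ finner (HH X) X ≤ hM * fnormSq X) :
    ∃ a₂ : ℝ, 0 < a₂ ∧ ∀ (u : R3 → R3) (P : R3 → M3),
      ContDiff ℝ 1 u → HasCompactSupport u → tsupport u ⊆ Ω →
      ContinuousOn P Ω → IntegrableOn (fun x => fnormSq (P x)) Ω →
      a₂ * ((∫ x in Ω, fnormSq (jac u x)) + ∫ x in Ω, fnormSq (devv (symMat (P x)))) ≤
        ∫ x in Ω, (finner (CC (symMat (jac u x - P x))) (symMat (jac u x - P x))
          + finner (HH (devv (symMat (P x)))) (devv (symMat (P x)))) := by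
  set a := min (cm / 4) (hm / 5)
  refine ⟨a, by positivity, fun u P hu hcu hΩu hPc hP => ?_⟩
  have hΩ := hΩo.measurableSet
  have hCX := fun X => hC (symMat X) (isSymmM_symMat X)
  have hHX := fun X => hH (devv (symMat X)) (isSymmM_devv (isSymmM_symMat X))
  have hGdev := (integrable_comp_jac (Φ := fun X => fnormSq (devv (symMat X))) (by fun_prop)
    (by simp) hu hcu).integrableOn (s := Ω)
  have hD := integrableOn_fnormSq_devv_symMat hΩ hPc hP
  have hS := integrableOn_fnormSq_symMat_jac_sub hu hcu hΩ hPc hP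
  calc a * ((∫ x in Ω, fnormSq (jac u x)) + ∫ x in Ω, fnormSq (devv (symMat (P x))))
      ≤ a * (2 * (∫ x in Ω, fnormSq (devv (symMat (jac u x))))
          + ∫ x in Ω, fnormSq (devv (symMat (P x)))) := by
        gcongr
        exact setIntegral_fnormSq_jac_le hu hcu hΩu
    _ = ∫ x in Ω, a * (2 * fnormSq (devv (symMat (jac u x))) + fnormSq (devv (symMat (P x)))) := by
        rw [integral_const_mul, integral_add (hGdev.const_mul 2) hD, integral_const_mul]
    _ ≤ _ := setIntegral_mono_on (((hGdev.const_mul 2).add hD).const_mul a)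
        ((integrableOn_finner_apply hΩ (by fun_prop) hS fun x => hCX _).add
          (integrableOn_finner_apply hΩ (by fun_prop) hD fun x => hHX _)) hΩ
        fun x _ => (mul_fnormSq_devv_symMat_add_le (by positivity) (min_le_left _ _)
          (min_le_right _ _) _ _).trans (add_le_add (hCX _).1 (hHX _).1)

/-- coercivity estimate of the further relaxed model in terms of
∇u and dev sym P. -/
theorem stmt_13 (Ω : Set R3) (hΩo : IsOpen Ω) (hΩb : Bornology.IsBounded Ω)
    (CC HH : M3 →ₗ[ℝ] M3)
    (hCmap : ∀ X : M3, isSymmM X → isSymmM (CC X))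
    (hHmap : ∀ X : M3, isSymmM X → isSymmM (HH X))
    (hCsa : ∀ X Y : M3, finner (CC X) Y = finner X (CC Y))
    (hHsa : ∀ X Y : M3, finner (HH X) Y = finner X (HH Y))
    (cm cM hm hM : ℝ) (hcm : 0 < cm) (hcM : 0 < cM) (hhm : 0 < hm) (hhM : 0 < hM)
    (hC : ∀ X : M3, isSymmM X →
      cm * fnormSq X ≤ finner (CC X) X ∧ finner (CC X) X ≤ cM * fnormSq X)
    (hH : ∀ X : M3, isSymmM X →
      hm * fnormSq X ≤ finner (HH X) X ∧ finner (HH X) X ≤ hM * fnormSq X) :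
    ∃ a₂ : ℝ, 0 < a₂ ∧ ∀ (u : R3 → R3) (P : R3 → M3),
      ContDiff ℝ 1 u → HasCompactSupport u → tsupport u ⊆ Ω →
      ContinuousOn P Ω → IntegrableOn (fun x => fnormSq (P x)) Ω →
      a₂ * ((∫ x in Ω, fnormSq (jac u x)) + ∫ x in Ω, fnormSq (devv (symMat (P x)))) ≤
        ∫ x in Ω, (finner (CC (symMat (jac u x - P x))) (symMat (jac u x - P x))
          + finner (HH (devv (symMat (P x)))) (devv (symMat (P x)))) :=
  stmt_13_general Ω hΩo CC HH cm cM hm hM hcm hhm hC hH
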